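/- The set E = {e^{iφ_n} : φ_n = c·∑_{k=n}^∞ 1/(k·log²k), n ≥ 2} ∪ {1}, with c^{-1} = ∑_{k=2}^∞ 1/(k·log²k), is closed in the unit circle and has Ahern–Clark type β(E) = 0. -/

import Mathlib

/-!
The angles `φ_n` decrease to `0` with consecutive gaps `c / (n log² n)`, so `E` is a convergent
sequence together with its limit, hence closed. Because the gaps shrink, the `x_n`-neighbourhood
of `E`, where `x_n = O(1/n)` is the `n`-th gap, covers the whole arc `(0, φ_n)`; telescoping
`1 / log k` shows that this arc has length at least `c / log n`. Hence `|E_{x_n}| ≳ 1 / log n`,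
which is not `O(x_n^β) = O(n^{-β})` for any `β > 0`, while `|E_x| ≤ 1` gives `β = 0`.
-/

open MeasureTheory Metric Set Filter
open scoped Topology

instance : Fact ((0 : ℝ) < 1) := ⟨one_pos⟩

/-- Normalized Lebesgue measure `|E_x|` of the open `x`-neighborhood (in arc-length
distance) of a set on the unit circle, modelled as `ℝ/ℤ` (so `|T| = 1`). -/
noncomputable def nbd (E : Set (AddCircle (1 : ℝ))) (x : ℝ) : ℝ :=
  (volume (Metric.thickening x E)).toReal

/-- The Ahern–Clark type `β(E) = sup {β ∈ ℝ : |E_x| = O(x^β), x → 0}`. -/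
noncomputable def ACtype (E : Set (AddCircle (1 : ℝ))) : ℝ :=
  sSup {β : ℝ | (fun x => nbd E x) =O[𝓝[>] (0 : ℝ)] fun x => x ^ β}

/-- The normalizing constant `c` with `c⁻¹ = ∑_{k=2}^∞ 1/(k log² k)`. -/
noncomputable def c12 : ℝ :=
  (∑' k : ℕ, 1 / (((k : ℝ) + 2) * Real.log ((k : ℝ) + 2) ^ 2))⁻¹

/-- The angles `φ_n = c ∑_{k=n}^∞ 1/(k log² k)` (for `n ≥ 2`). -/
noncomputable def φ12 (n : ℕ) : ℝ :=
  c12 * ∑' k : ℕ, 1 / (((n : ℝ) + (k : ℝ)) * Real.log ((n : ℝ) + (k : ℝ)) ^ 2)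

/-- The set `E = {e^{iφ_n} : n ≥ 2} ∪ {1}`, viewed on the circle `ℝ/ℤ`
(the point `e^{iφ}` has normalized coordinate `φ / (2π)`). -/
noncomputable def E12 : Set (AddCircle (1 : ℝ)) :=
  {p | ∃ n : ℕ, 2 ≤ n ∧ p = ((φ12 n / (2 * Real.pi) : ℝ) : AddCircle (1 : ℝ))} ∪
    {((0 : ℝ) : AddCircle (1 : ℝ))}

open Real

namespace AhernClark

theorem nbd_nonneg (E : Set (AddCircle (1 : ℝ))) (x : ℝ) : 0 ≤ nbd E x :=
  ENNReal.toReal_nonneg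

theorem nbd_le_one (E : Set (AddCircle (1 : ℝ))) (x : ℝ) : nbd E x ≤ 1 := by
  have h : volume (thickening x E) ≤ 1 := by
    simpa [AddCircle.measure_univ] using measure_mono (μ := volume) (subset_univ (thickening x E))
  exact (ENNReal.toReal_mono ENNReal.one_ne_top h).trans_eq ENNReal.toReal_one

theorem nbd_isBigO_rpow_zero (E : Set (AddCircle (1 : ℝ))) :
    (fun x => nbd E x) =O[𝓝[>] (0 : ℝ)] fun x : ℝ => x ^ (0 : ℝ) :=
  Asymptotics.IsBigO.of_bound 1 <| .of_forall fun x => by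
    simpa [abs_of_nonneg (nbd_nonneg E x)] using nbd_le_one E x

theorem ACtype_eq_zero_of_forall_nonpos {E : Set (AddCircle (1 : ℝ))}
    (h : ∀ β : ℝ, ((fun x => nbd E x) =O[𝓝[>] (0 : ℝ)] fun x : ℝ => x ^ β) → β ≤ 0) :
    ACtype E = 0 :=
  IsGreatest.csSup_eq ⟨nbd_isBigO_rpow_zero E, h⟩

theorem le_nbd_of_Ioo_subset {E : Set (AddCircle (1 : ℝ))} {x a : ℝ} (ha : a ≤ 1)
    (h : Ioo 0 a ⊆ ((↑) : ℝ → AddCircle (1 : ℝ)) ⁻¹' thickening x E) : a ≤ nbd E x := by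
  have hpre := (AddCircle.measurePreserving_mk 1 0).measure_preimage
    isOpen_thickening.measurableSet.nullMeasurableSet (s := thickening x E)
  have hIoo : Ioo 0 a ∩ Ioc 0 (0 + 1) = Ioo 0 a :=
    inter_eq_left.2 fun t ht => ⟨ht.1, by linarith [ht.2]⟩
  have hvol : ENNReal.ofReal a ≤ volume (thickening x E) := by
    rw [← hpre, ← sub_zero a, ← Real.volume_Ioo, ← hIoo, ← Measure.restrict_apply measurableSet_Ioo]
    exact measure_mono h
  exact (ENNReal.ofReal_le_iff_le_toReal (measure_ne_top _ _)).1 hvol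

theorem exists_le_and_lt_succ_of_tendsto_zero {a : ℕ → ℝ} {n : ℕ} {t : ℝ}
    (ha : Tendsto a atTop (𝓝 0)) (ht : 0 < t) (htn : t ≤ a n) :
    ∃ k, n ≤ k ∧ t ≤ a k ∧ a (k + 1) < t := by
  by_contra! h
  have hge : ∀ k, n ≤ k → t ≤ a k := fun k hk =>
    Nat.le_induction htn (fun k hk ih => h k hk ih) k hk
  obtain ⟨k, hnk, hk⟩ := ((eventually_ge_atTop n).and (ha.eventually_lt_const ht)).exists
  exact (hge k hnk).not_gt hk

theorem dist_coe_le_abs (s t : ℝ) :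
    dist (s : AddCircle (1 : ℝ)) (t : AddCircle (1 : ℝ)) ≤ |s - t| := by
  rw [dist_eq_norm, ← AddCircle.coe_sub]
  exact QuotientAddGroup.norm_mk_le_norm

theorem le_nbd_of_tendsto_zero {E : Set (AddCircle (1 : ℝ))} {a : ℕ → ℝ} {n : ℕ} {x : ℝ}
    (ha : Tendsto a atTop (𝓝 0)) (han : a n ≤ 1)
    (hstep : ∀ k, n ≤ k → a k - a (k + 1) ≤ x) (hE : ∀ k, n ≤ k → (a k : AddCircle (1 : ℝ)) ∈ E) :
    a n ≤ nbd E x := by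
  refine le_nbd_of_Ioo_subset han fun t ht => ?_
  obtain ⟨k, hnk, htk, hkt⟩ := exists_le_and_lt_succ_of_tendsto_zero ha ht.1 ht.2.le
  refine mem_thickening_iff.2 ⟨_, hE k hnk, ?_⟩
  calc dist (t : AddCircle (1 : ℝ)) (a k) ≤ |t - a k| := dist_coe_le_abs t (a k)
    _ = a k - t := by rw [abs_sub_comm, abs_of_nonneg (by linarith)]
    _ < a k - a (k + 1) := by linarith
    _ ≤ x := hstep k hnk

theorem isClosed_setOf_exists_le_eq_union {X : Type*} [TopologicalSpace X] [T2Space X]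
    {b : ℕ → X} {x : X} (hb : Tendsto b atTop (𝓝 x)) (N : ℕ) :
    IsClosed ({p | ∃ n, N ≤ n ∧ p = b n} ∪ {x}) := by
  convert ((hb.comp (tendsto_add_atTop_nat N)).isCompact_insert_range).isClosed using 1
  ext p
  simp only [mem_union, mem_ofPred_eq, mem_singleton_iff, mem_insert_iff, mem_range,
    Function.comp_apply]
  constructor
  · rintro (⟨n, hn, rfl⟩ | rfl)
    · exact Or.inr ⟨n - N, by rw [Nat.sub_add_cancel hn]⟩
    · exact Or.inl rfl
  · rintro (rfl | ⟨m, rfl⟩)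
    · exact Or.inr rfl
    · exact Or.inl ⟨m + N, by omega, rfl⟩

theorem hasSum_sub_succ_of_antitone {g : ℕ → ℝ} (hg : Antitone g) (hlim : Tendsto g atTop (𝓝 0)) :
    HasSum (fun k => g k - g (k + 1)) (g 0) := by
  rw [hasSum_iff_tendsto_nat_of_nonneg fun k => sub_nonneg.2 (hg k.le_succ)]
  simp_rw [Finset.sum_range_sub']
  simpa using (tendsto_const_nhds (x := g 0)).sub hlim

theorem not_isBigO_inv_log_rpow_neg {β : ℝ} (hβ : 0 < β) :
    ¬ (fun n : ℕ => (log n)⁻¹) =O[atTop] fun n : ℕ => (n : ℝ) ^ (-β) := by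
  intro h
  have hlog : ∀ᶠ n : ℕ in atTop, log n ≠ 0 := (eventually_ge_atTop 2).mono fun n hn =>
    (log_pos (by exact_mod_cast hn)).ne'
  have hlo : (fun n : ℕ => (n : ℝ) ^ (-β)) =o[atTop] fun n : ℕ => (log n)⁻¹ := by
    refine (((isLittleO_log_rpow_atTop hβ).comp_tendsto tendsto_natCast_atTop_atTop).inv_rev
      (hlog.mono fun n hn h0 => absurd h0 hn)).congr_left fun n => ?_
    simp [rpow_neg (Nat.cast_nonneg n)]
  exact Asymptotics.isLittleO_irrefl (hlog.mono fun n hn => inv_ne_zero hn).frequently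
    (h.trans_isLittleO hlo)

noncomputable def invMulLogSq (t : ℝ) : ℝ := 1 / (t * log t ^ 2)

theorem invMulLogSq_pos {t : ℝ} (ht : 1 < t) : 0 < invMulLogSq t := by
  have := log_pos ht
  unfold invMulLogSq
  positivity

theorem invMulLogSq_antitoneOn : AntitoneOn invMulLogSq (Ioi 1) := by
  intro s hs t _ hst
  have hs0 : 0 < log s := log_pos hs
  have hlog : log s ≤ log t := log_le_log (by linarith [mem_Ioi.1 hs]) hst
  have hs1 : 0 < s := by linarith [mem_Ioi.1 hs]
  unfold invMulLogSq
  gcongr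
  linarith

theorem invMulLogSq_isBigO_inv : invMulLogSq =O[atTop] fun t => t⁻¹ := by
  have hlog : Tendsto (fun t => (log t ^ 2)⁻¹) atTop (𝓝 0) :=
    ((tendsto_pow_atTop two_ne_zero).comp tendsto_log_atTop).inv_tendsto_atTop
  have h : invMulLogSq = fun t => t⁻¹ * (log t ^ 2)⁻¹ :=
    funext fun t => by rw [invMulLogSq, one_div, mul_inv]
  simpa [h] using (Asymptotics.isBigO_refl (fun t : ℝ => t⁻¹) atTop).mul (hlog.isBigO_one ℝ)

theorem inv_log_sub_inv_log_add_one_le {t : ℝ} (ht : 1 < t) :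
    (log t)⁻¹ - (log (t + 1))⁻¹ ≤ invMulLogSq t := by
  have ht0 : 0 < t := by linarith
  have hA := log_pos ht
  have hB : 0 < log (t + 1) := log_pos (by linarith)
  have hAB : log t ≤ log (t + 1) := log_le_log ht0 (by linarith)
  have hdiff : (log (t + 1) - log t) * t ≤ 1 := by
    rw [← le_div_iff₀ ht0, ← log_div (by linarith) ht0.ne']
    linarith [log_le_sub_one_of_pos (show 0 < (t + 1) / t by positivity),
      show (t + 1) / t - 1 = 1 / t by field_simp; ring]
  rw [invMulLogSq, inv_sub_inv hA.ne' hB.ne', div_le_div_iff₀ (mul_pos hA hB) (by positivity)]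
  nlinarith [mul_le_mul_of_nonneg_right hdiff (sq_nonneg (log t)),
    mul_le_mul_of_nonneg_left hAB hA.le]

theorem invMulLogSq_add_one_le {t : ℝ} (ht : 1 < t) :
    invMulLogSq (t + 1) ≤ (log t)⁻¹ - (log (t + 1))⁻¹ := by
  have ht0 : 0 < t := by linarith
  have hA := log_pos ht
  have hB : 0 < log (t + 1) := log_pos (by linarith)
  have hAB : log t ≤ log (t + 1) := log_le_log ht0 (by linarith)
  have hdiff : 1 ≤ (log (t + 1) - log t) * (t + 1) := by
    rw [← div_le_iff₀ (by linarith), ← log_div (by linarith) ht0.ne']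
    linarith [one_sub_inv_le_log_of_pos (show 0 < (t + 1) / t by positivity),
      show 1 - ((t + 1) / t)⁻¹ = 1 / (t + 1) by field_simp; ring]
  rw [invMulLogSq, inv_sub_inv hA.ne' hB.ne', div_le_div_iff₀ (by positivity) (mul_pos hA hB)]
  nlinarith [mul_le_mul_of_nonneg_right hdiff (sq_nonneg (log (t + 1))),
    mul_le_mul_of_nonneg_right hAB hB.le]

noncomputable def tail (n : ℕ) : ℝ := ∑' k : ℕ, invMulLogSq (n + k)

theorem one_lt_cast_add {n : ℕ} (hn : 2 ≤ n) (k : ℕ) : (1 : ℝ) < n + k := by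
  have : (2 : ℝ) ≤ n := by exact_mod_cast hn
  linarith [(Nat.cast_nonneg k : (0 : ℝ) ≤ k)]

theorem hasSum_inv_log_sub {n : ℕ} (hn : 2 ≤ n) :
    HasSum (fun k : ℕ => (log (n + k))⁻¹ - (log (n + k + 1))⁻¹) (log n)⁻¹ := by
  have hmono : Antitone fun k : ℕ => (log (n + k))⁻¹ := antitone_nat_of_succ_le fun k => by
    have := log_pos (one_lt_cast_add hn k)
    push_cast
    gcongr
    linarith [one_lt_cast_add hn k]
  have hlim : Tendsto (fun k : ℕ => (log (n + k))⁻¹) atTop (𝓝 0) :=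
    (tendsto_log_atTop.comp
      (tendsto_atTop_add_const_left _ _ tendsto_natCast_atTop_atTop)).inv_tendsto_atTop
  simpa [add_assoc] using hasSum_sub_succ_of_antitone hmono hlim

theorem summable_invMulLogSq_add {n : ℕ} (hn : 2 ≤ n) :
    Summable fun k : ℕ => invMulLogSq (n + k) := by
  refine (summable_nat_add_iff 1).1 <| (hasSum_inv_log_sub hn).summable.of_nonneg_of_le
    (fun k => (invMulLogSq_pos (one_lt_cast_add hn _)).le) fun k => ?_
  simpa [add_assoc] using invMulLogSq_add_one_le (one_lt_cast_add hn k)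

theorem inv_log_le_tail {n : ℕ} (hn : 2 ≤ n) : (log n)⁻¹ ≤ tail n :=
  hasSum_le (fun k => inv_log_sub_inv_log_add_one_le (one_lt_cast_add hn k))
    (hasSum_inv_log_sub hn) (summable_invMulLogSq_add hn).hasSum

theorem tail_pos {n : ℕ} (hn : 2 ≤ n) : 0 < tail n :=
  (inv_pos.2 (log_pos (by exact_mod_cast hn))).trans_le (inv_log_le_tail hn)

theorem tail_eq_add_tail_succ {n : ℕ} (hn : 2 ≤ n) :
    tail n = invMulLogSq n + tail (n + 1) := by
  rw [tail, (summable_invMulLogSq_add hn).tsum_eq_zero_add, tail]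
  simp [add_assoc, add_comm (1 : ℝ)]

theorem tail_le_tail_two {n : ℕ} (hn : 2 ≤ n) : tail n ≤ tail 2 := by
  induction n, hn using Nat.le_induction with
  | base => rfl
  | succ k hk ih =>
    linarith [tail_eq_add_tail_succ hk, invMulLogSq_pos (Nat.one_lt_cast.2 hk)]

theorem tendsto_tail : Tendsto tail atTop (𝓝 0) := by
  rw [← tendsto_add_atTop_iff_nat 2]
  refine (tendsto_sum_nat_add fun k => invMulLogSq (2 + k)).congr fun i => ?_
  simp only [tail]
  push_cast
  exact tsum_congr fun k => by ring_nf

theorem c12_eq_inv_tail_two : c12 = (tail 2)⁻¹ := by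
  simp only [c12, tail, invMulLogSq, Nat.cast_ofNat, add_comm (2 : ℝ)]

theorem c12_pos : 0 < c12 := by
  rw [c12_eq_inv_tail_two]
  exact inv_pos.2 (tail_pos le_rfl)

theorem φ12_eq_c12_mul_tail (n : ℕ) : φ12 n = c12 * tail n := rfl

noncomputable def θ12 (n : ℕ) : ℝ := φ12 n / (2 * π)

theorem θ12_sub_θ12_succ {n : ℕ} (hn : 2 ≤ n) :
    θ12 n - θ12 (n + 1) = c12 / (2 * π) * invMulLogSq n := by
  rw [θ12, θ12, φ12_eq_c12_mul_tail, φ12_eq_c12_mul_tail, tail_eq_add_tail_succ hn]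
  ring

theorem tendsto_θ12 : Tendsto θ12 atTop (𝓝 0) := by
  have h := (tendsto_tail.const_mul c12).div_const (2 * π)
  rwa [mul_zero, zero_div] at h

theorem θ12_le_one {n : ℕ} (hn : 2 ≤ n) : θ12 n ≤ 1 := by
  have hφ : φ12 n ≤ 1 := calc
    φ12 n = c12 * tail n := φ12_eq_c12_mul_tail n
    _ ≤ c12 * tail 2 := mul_le_mul_of_nonneg_left (tail_le_tail_two hn) c12_pos.le
    _ = 1 := by rw [c12_eq_inv_tail_two, inv_mul_cancel₀ (tail_pos le_rfl).ne']
  exact (div_le_one (by positivity)).2 (hφ.trans (by linarith [pi_gt_three]))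

theorem c12_div_mul_inv_log_le_θ12 {n : ℕ} (hn : 2 ≤ n) :
    c12 / (2 * π) * (log n)⁻¹ ≤ θ12 n := by
  rw [θ12, φ12_eq_c12_mul_tail, mul_div_right_comm]
  exact mul_le_mul_of_nonneg_left (inv_log_le_tail hn) (by positivity [c12_pos])

theorem θ12_le_nbd {n : ℕ} (hn : 2 ≤ n) : θ12 n ≤ nbd E12 (θ12 n - θ12 (n + 1)) := by
  refine le_nbd_of_tendsto_zero tendsto_θ12 (θ12_le_one hn) (fun k hk => ?_)
    fun k hk => Or.inl ⟨k, hn.trans hk, rfl⟩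
  rw [θ12_sub_θ12_succ (hn.trans hk), θ12_sub_θ12_succ hn]
  have hn1 : (1 : ℝ) < n := Nat.one_lt_cast.2 hn
  have hnk : (n : ℝ) ≤ k := by exact_mod_cast hk
  exact mul_le_mul_of_nonneg_left (invMulLogSq_antitoneOn hn1 (hn1.trans_le hnk) hnk)
    (by positivity [c12_pos])

theorem isClosed_E12 : IsClosed E12 :=
  isClosed_setOf_exists_le_eq_union (((AddCircle.continuous_mk' 1).tendsto 0).comp tendsto_θ12) 2

theorem tendsto_θ12_sub_θ12_succ :
    Tendsto (fun n => θ12 n - θ12 (n + 1)) atTop (𝓝[>] 0) := by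
  refine tendsto_nhdsWithin_iff.2 ⟨?_, (eventually_ge_atTop 2).mono fun n hn => ?_⟩
  · simpa using tendsto_θ12.sub (tendsto_θ12.comp (tendsto_add_atTop_nat 1))
  · rw [mem_Ioi, θ12_sub_θ12_succ hn]
    have := invMulLogSq_pos (Nat.one_lt_cast.2 hn)
    positivity [c12_pos]

theorem θ12_sub_θ12_succ_isBigO :
    (fun n => θ12 n - θ12 (n + 1)) =O[atTop] fun n : ℕ => (n : ℝ)⁻¹ := by
  have h := (invMulLogSq_isBigO_inv.comp_tendsto tendsto_natCast_atTop_atTop).const_mul_left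
    (c12 / (2 * π))
  exact h.congr' ((eventually_ge_atTop 2).mono fun _ hn => (θ12_sub_θ12_succ hn).symm) .rfl

theorem inv_log_isBigO_nbd_E12 :
    (fun n : ℕ => (log n)⁻¹) =O[atTop] fun n => nbd E12 (θ12 n - θ12 (n + 1)) := by
  refine Asymptotics.IsBigO.of_bound (2 * π / c12) <| (eventually_ge_atTop 2).mono fun n hn => ?_
  have hlog : 0 < log n := log_pos (Nat.one_lt_cast.2 hn)
  rw [norm_of_nonneg (inv_pos.2 hlog).le, norm_of_nonneg (nbd_nonneg _ _),
    ← div_le_iff₀' (by positivity [c12_pos]), div_div_eq_mul_div]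
  calc (log n)⁻¹ * c12 / (2 * π) = c12 / (2 * π) * (log n)⁻¹ := by ring
    _ ≤ θ12 n := c12_div_mul_inv_log_le_θ12 hn
    _ ≤ nbd E12 (θ12 n - θ12 (n + 1)) := θ12_le_nbd hn

theorem nonpos_of_nbd_E12_isBigO {β : ℝ}
    (h : (fun x => nbd E12 x) =O[𝓝[>] (0 : ℝ)] fun x : ℝ => x ^ β) : β ≤ 0 := by
  by_contra! hβ
  have hrpow : (fun n => (θ12 n - θ12 (n + 1)) ^ β) =O[atTop] fun n : ℕ => (n : ℝ) ^ (-β) :=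
    (θ12_sub_θ12_succ_isBigO.rpow hβ.le (.of_forall fun n => by positivity)).congr_right
      fun n => by rw [inv_rpow (Nat.cast_nonneg n), rpow_neg (Nat.cast_nonneg n)]
  exact not_isBigO_inv_log_rpow_neg hβ <|
    inv_log_isBigO_nbd_E12.trans ((h.comp_tendsto tendsto_θ12_sub_θ12_succ).trans hrpow)

end AhernClark

theorem stmt12 : IsClosed E12 ∧ ACtype E12 = 0 :=
  ⟨AhernClark.isClosed_E12,
    AhernClark.ACtype_eq_zero_of_forall_nonpos fun _ => AhernClark.nonpos_of_nbd_E12_isBigO⟩
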